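/- (Main theorem for integral matrices) Every integral preference matrix M on n ≥ 2 candidates satisfies α(M) ≤ 3·χ(G_M)/log₂ n, and for all sufficiently large n there exists an integral preference matrix M on n candidates with α(M) ≥ χ(G_M)/(2·log₂ n + 1), where χ(G_M)=n since the unanimity graph of an integral matrix is complete. -/

import Mathlib

open scoped Classical

/-- A voter: a strict partial order on the set `C` of candidates. -/
structure Voter (C : Type) where
  rel : C → C → Prop
  irrefl : ∀ i, ¬ rel i i
  trans : ∀ {i j k}, rel i j → rel j k → rel i k

namespace Voter

variable {C : Type}

/-- The voter strongly prefers `i` over `j`. -/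
def strong (v : Voter C) (i j : C) : Prop := v.rel i j

/-- The voter weakly prefers `i` over `j`: strongly prefers, or is indifferent. -/
def weak (v : Voter C) (i j : C) : Prop := v.rel i j ∨ (¬ v.rel i j ∧ ¬ v.rel j i)

/-- A finite antichain of the voter's partial order. -/
def IsAntichainOf (v : Voter C) (A : Finset C) : Prop :=
  ∀ i ∈ A, ∀ j ∈ A, i ≠ j → ¬ v.rel i j ∧ ¬ v.rel j i

/-- A voter is `α`-rational if every antichain of its partial order has size at most `α`. -/
def Rational (v : Voter C) (α : ℕ) : Prop :=
  ∀ A : Finset C, v.IsAntichainOf A → A.card ≤ α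

end Voter

/-- Number of voters in the list `V` satisfying the predicate `P`. -/
noncomputable def countVoters {C : Type} (V : List (Voter C)) (P : Voter C → Prop) : ℕ :=
  (V.map fun v => if P v then 1 else 0).sum

/-- A (finite, nonempty) list of voters is consistent with the matrix `M` if the
rationality constraints hold for every ordered pair of distinct candidates. -/
def Consistent {C : Type} (M : C → C → ℝ) (V : List (Voter C)) : Prop :=
  V ≠ [] ∧ ∀ i j : C, i ≠ j →
    (countVoters V (fun v => v.strong i j) : ℝ) / (V.length : ℝ) ≤ M i j ∧
      M i j ≤ (countVoters V (fun v => v.weak i j) : ℝ) / (V.length : ℝ)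

/-- `M` is a preference matrix. -/
def IsPrefMatrix {C : Type} (M : C → C → ℝ) : Prop :=
  (∀ i, M i i = 0) ∧ (∀ i j, 0 ≤ M i j) ∧ (∀ i j : C, i ≠ j → M i j + M j i = 1)

/-- `M` is half-integral. -/
def HalfIntegral {C : Type} (M : C → C → ℝ) : Prop :=
  ∀ i j, M i j = 0 ∨ M i j = 1 / 2 ∨ M i j = 1

/-- `M` is integral. -/
def Integral {C : Type} (M : C → C → ℝ) : Prop :=
  ∀ i j, M i j = 0 ∨ M i j = 1

/-- `M` is `α`-rationalizable: some finite nonempty list of `α`-rational voters is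
consistent with `M`. -/
def Rationalizable {C : Type} (M : C → C → ℝ) (α : ℕ) : Prop :=
  ∃ V : List (Voter C), Consistent M V ∧ ∀ v ∈ V, v.Rational α

/-- The rationality number of `M`: the least `α` such that `M` is `α`-rationalizable. -/
noncomputable def rationalityNumber {C : Type} (M : C → C → ℝ) : ℕ :=
  sInf {α | Rationalizable M α}

/-- The unanimity graph of `M`: an edge between `i` and `j` iff `p i j = 1` or `p j i = 1`. -/
def unanimityGraph {C : Type} (M : C → C → ℝ) : SimpleGraph C where
  Adj i j := i ≠ j ∧ (M i j = 1 ∨ M j i = 1)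
  symm := by
    constructor
    intro i j h
    exact ⟨h.1.symm, h.2.symm⟩
  loopless := by
    constructor
    intro i h
    exact h.1 rfl

/-- The voting graph of `M`, as a relation: an arc from `i` to `j` iff `p i j = 1`. -/
def votingRel {C : Type} (M : C → C → ℝ) : C → C → Prop := fun i j => M i j = 1

/-- The relation `r` is acyclic on the set `S`: no directed cycle inside `S`. -/
def AcyclicOn {C : Type} (r : C → C → Prop) (S : Set C) : Prop :=
  ∀ x, ¬ Relation.TransGen (fun a b => a ∈ S ∧ b ∈ S ∧ r a b) x x

/-- The dichromatic number of the digraph given by the relation `r`: the minimum number of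
parts in a partition of the vertices into sets each inducing an acyclic subdigraph. -/
noncomputable def dichromaticNumber {C : Type} (r : C → C → Prop) : ℕ :=
  sInf {k | ∃ c : C → Fin k, ∀ m : Fin k, AcyclicOn r {x | c x = m}}

/-- `r` is a tournament: irreflexive with exactly one arc between distinct vertices. -/
def IsTournament {C : Type} (r : C → C → Prop) : Prop :=
  (∀ i, ¬ r i i) ∧ ∀ i j : C, i ≠ j → (r i j ↔ ¬ r j i)

/-- The voter's partial order partitions the candidates into at most `α` disjoint chains:
two distinct candidates are comparable iff they lie in the same chain. -/
def ChainPartition {C : Type} (v : Voter C) (α : ℕ) : Prop :=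
  ∃ c : C → ℕ, (∀ i, c i < α) ∧
    ∀ i j : C, i ≠ j → ((v.rel i j ∨ v.rel j i) ↔ c i = c j)
section Chunk1

variable {n : ℕ}

lemma countVoters_singleton {C : Type} (v : Voter C) (P : Voter C → Prop) :
    countVoters [v] P = if P v then 1 else 0 := by
  simp [countVoters]

lemma countVoters_pos {C : Type} {V : List (Voter C)} {P : Voter C → Prop}
    {v : Voter C} (hv : v ∈ V) (hP : P v) : 0 < countVoters V P := by
  induction V with
  | nil => simp at hv
  | cons w V ih =>
    rcases List.mem_cons.1 hv with h | h
    · simp_all [countVoters]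
    · have := ih h
      simp only [countVoters, List.map_cons, List.sum_cons] at *
      omega

lemma countVoters_le_length {C : Type} (V : List (Voter C)) (P : Voter C → Prop) :
    countVoters V P ≤ V.length := by
  induction V with
  | nil => simp [countVoters]
  | cons w V ih =>
    simp only [countVoters, List.map_cons, List.sum_cons, List.length_cons] at *
    split <;> omega

/-- a single voter whose relation is a subrelation of the arcs of a preference
matrix is consistent with it. -/
lemma consistent_single {M : Fin n → Fin n → ℝ} (hM : IsPrefMatrix M)
    (v : Voter (Fin n)) (hsub : ∀ i j, v.rel i j → M i j = 1) :
    Consistent M [v] := by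
  refine ⟨by simp, fun i j hij => ?_⟩
  obtain ⟨h0, hnn, hsum⟩ := hM
  have hlen : ([v] : List (Voter (Fin n))).length = 1 := rfl
  rw [hlen, countVoters_singleton, countVoters_singleton]
  push_cast
  constructor
  · by_cases h : v.strong i j
    · simp only [h, if_true]
      rw [hsub i j h]
      norm_num
    · simp only [h, if_false]
      have := hnn i j
      norm_num
      linarith
  · by_cases h : v.weak i j
    · simp only [h, if_true]
      have h1 := hsum i j hij
      have := hnn j i
      norm_num
      linarith
    · simp only [h, if_false]
      have hji : v.rel j i := by
        unfold Voter.weak at h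
        push_neg at h
        exact h.2 h.1
      have := hsub j i hji
      have h1 := hsum i j hij
      norm_num
      linarith

/-- Rationalizability via a chain-partition coloring. -/
lemma rationalizable_of_coloring {M : Fin n → Fin n → ℝ} (hM : IsPrefMatrix M)
    (hT : ∀ i j : Fin n, i ≠ j → M i j = 1 ∨ M j i = 1)
    (k : ℕ) (c : Fin n → ℕ) (hc : ∀ x, c x < k)
    (htr : ∀ i j l : Fin n, c i = c j → c j = c l → M i j = 1 → M j l = 1 → M i l = 1) :
    Rationalizable M k := by
  obtain ⟨h0, hnn, hsum⟩ := hM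
  have hone : ∀ i j : Fin n, M i j = 1 → ¬ M j i = 1 := by
    intro i j h1 h2
    by_cases hij : i = j
    · subst hij; rw [h0] at h1; norm_num at h1
    · have := hsum i j hij; linarith
  have hMii : ∀ i : Fin n, ¬ M i i = 1 := fun i h => by rw [h0] at h; norm_num at h
  set v : Voter (Fin n) :=
    { rel := fun i j => c i = c j ∧ M i j = 1
      irrefl := fun i h => hMii i h.2
      trans := by
        intro i j l hij hjl
        exact ⟨hij.1.trans hjl.1, htr i j l hij.1 hjl.1 hij.2 hjl.2⟩ } with hv
  refine ⟨[v], consistent_single ⟨h0, hnn, hsum⟩ v (fun i j h => h.2), ?_⟩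
  intro w hw
  have hwv : w = v := by simpa using hw
  subst hwv
  intro A hA
  have hinj : Set.InjOn c A := by
    intro x hx y hy hcxy
    by_contra hne
    have := hA x hx y hy hne
    rcases hT x y hne with h | h
    · exact this.1 ⟨hcxy, h⟩
    · exact this.2 ⟨hcxy.symm, h⟩
  calc A.card = (A.image c).card := (Finset.card_image_of_injOn hinj).symm
    _ ≤ (Finset.range k).card := Finset.card_le_card (by
        intro m hm
        simp only [Finset.mem_image] at hm
        obtain ⟨x, _, rfl⟩ := hm
        exact Finset.mem_range.2 (hc x))
    _ = k := Finset.card_range k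

/-- trivial voter: every preference matrix on `Fin n` is `n`-rationalizable. -/
lemma rationalizable_trivial (M : Fin n → Fin n → ℝ) (hM : IsPrefMatrix M) :
    Rationalizable M n := by
  set v : Voter (Fin n) :=
    { rel := fun _ _ => False
      irrefl := fun _ h => h
      trans := fun h _ => h.elim } with hv
  refine ⟨[v], consistent_single hM v (fun _ _ h => h.elim), ?_⟩
  intro w hw A hA
  calc A.card ≤ (Finset.univ : Finset (Fin n)).card := Finset.card_le_univ A
    _ = n := Finset.card_univ.trans (Fintype.card_fin n)

/-- consistency with an integral matrix forces each voter's relation inside the arcs. -/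
lemma rel_subset_of_consistent {M : Fin n → Fin n → ℝ} (hM : IsPrefMatrix M)
    (hI : Integral M) {V : List (Voter (Fin n))} (hC : Consistent M V)
    {v : Voter (Fin n)} (hv : v ∈ V) {i j : Fin n} (h : v.rel i j) : M i j = 1 := by
  by_cases hij : i = j
  · exact absurd (hij ▸ h) (v.irrefl j)
  · rcases hI i j with h0 | h1
    · exfalso
      have hcount : 0 < countVoters V (fun w => w.strong i j) :=
        countVoters_pos hv h
      have hlen : 0 < V.length := List.length_pos_iff.2 hC.1
      have hle := (hC.2 i j hij).1
      rw [h0] at hle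
      have h1 : (0:ℝ) < (countVoters V (fun w => w.strong i j) : ℝ) / (V.length : ℝ) :=
        div_pos (by exact_mod_cast hcount) (by exact_mod_cast hlen)
      linarith
    · exact h1

end Chunk1
section Chunk2

variable {n : ℕ}

/-- the relation `r` is transitive on the finset `S`. -/
def TransOnF {n : ℕ} (r : Fin n → Fin n → Prop) (S : Finset (Fin n)) : Prop :=
  ∀ i ∈ S, ∀ j ∈ S, ∀ l ∈ S, r i j → r j l → r i l

lemma TransOnF_mono {r : Fin n → Fin n → Prop} {A B : Finset (Fin n)}
    (hAB : A ⊆ B) (hB : TransOnF r B) : TransOnF r A :=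
  fun i hi j hj l hl => hB i (hAB hi) j (hAB hj) l (hAB hl)

lemma TransOnF_flip {r : Fin n → Fin n → Prop} {A : Finset (Fin n)} :
    TransOnF (fun a b => r b a) A ↔ TransOnF r A := by
  constructor <;> intro h i hi j hj l hl h1 h2 <;> exact h l hl j hj i hi h2 h1

lemma TransOnF_insert_src {r : Fin n → Fin n → Prop}
    (hirr : ∀ i, ¬ r i i) (hasym : ∀ i j, r i j → ¬ r j i)
    {A : Finset (Fin n)} {x : Fin n} (hx : ∀ a ∈ A, r x a)
    (hA : TransOnF r A) : TransOnF r (insert x A) := by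
  intro i hi j hj l hl hij hjl
  rcases Finset.mem_insert.1 hj with rfl | hj'
  · rcases Finset.mem_insert.1 hi with rfl | hi'
    · exact absurd hij (hirr _)
    · exact absurd hij (hasym _ _ (hx i hi'))
  · rcases Finset.mem_insert.1 hl with rfl | hl'
    · exact absurd hjl (hasym _ _ (hx j hj'))
    · rcases Finset.mem_insert.1 hi with rfl | hi'
      · exact hx l hl'
      · exact hA i hi' j hj' l hl' hij hjl

/-- every tournament with at least `2^k` vertices contains a transitive set of size `k+1`. -/
lemma exists_transSet {r : Fin n → Fin n → Prop}
    (hirr : ∀ i, ¬ r i i) (htot : ∀ i j : Fin n, i ≠ j → r i j ∨ r j i)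
    (hasym : ∀ i j, r i j → ¬ r j i) :
    ∀ (k : ℕ) (S : Finset (Fin n)), 2 ^ k ≤ S.card →
      ∃ A ⊆ S, A.card = k + 1 ∧ TransOnF r A := by
  intro k
  induction k with
  | zero =>
    intro S hS
    obtain ⟨x, hx⟩ := Finset.card_pos.1 (by omega : 0 < S.card)
    refine ⟨{x}, Finset.singleton_subset_iff.2 hx, Finset.card_singleton x, ?_⟩
    intro i hi j hj l hl hij _
    simp only [Finset.mem_singleton] at hi hj
    subst hi; subst hj; exact absurd hij (hirr _)
  | succ k ih =>
    intro S hS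
    have hpos : 0 < S.card := lt_of_lt_of_le (by positivity) hS
    obtain ⟨x, hx⟩ := Finset.card_pos.1 hpos
    set Out := (S.erase x).filter (fun y => r x y) with hOut
    set In := (S.erase x).filter (fun y => ¬ r x y) with hIn
    have hcard : Out.card + In.card = S.card - 1 := by
      rw [hOut, hIn, Finset.card_filter_add_card_filter_not,
        Finset.card_erase_of_mem hx]
    have hmax : 2 ^ k ≤ Out.card ∨ 2 ^ k ≤ In.card := by
      have h2 : 2 ^ (k+1) = 2 ^ k + 2 ^ k := by ring
      omega
    have hsub2 : ∀ (B : Finset (Fin n)), B ⊆ (S.erase x).filter (fun y => r x y) ∨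
        B ⊆ (S.erase x).filter (fun y => ¬ r x y) → True := fun _ _ => trivial
    rcases hmax with h | h
    · obtain ⟨A, hAsub, hAcard, hAtr⟩ := ih Out h
      have hmemA : ∀ a ∈ A, a ∈ S.erase x ∧ r x a := by
        intro a ha; exact Finset.mem_filter.1 (hAsub ha)
      have hxA : x ∉ A := fun hxa => (Finset.mem_erase.1 (hmemA x hxa).1).1 rfl
      refine ⟨insert x A, ?_, ?_, ?_⟩
      · intro y hy
        rcases Finset.mem_insert.1 hy with rfl | hy'
        · exact hx
        · exact (Finset.mem_erase.1 (hmemA y hy').1).2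
      · rw [Finset.card_insert_of_notMem hxA, hAcard]
      · exact TransOnF_insert_src hirr hasym (fun a ha => (hmemA a ha).2) hAtr
    · obtain ⟨A, hAsub, hAcard, hAtr⟩ := ih In h
      have hmemA : ∀ a ∈ A, a ∈ S.erase x ∧ ¬ r x a := by
        intro a ha; exact Finset.mem_filter.1 (hAsub ha)
      have hxA : x ∉ A := fun hxa => (Finset.mem_erase.1 (hmemA x hxa).1).1 rfl
      refine ⟨insert x A, ?_, ?_, ?_⟩
      · intro y hy
        rcases Finset.mem_insert.1 hy with rfl | hy'
        · exact hx
        · exact (Finset.mem_erase.1 (hmemA y hy').1).2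
      · rw [Finset.card_insert_of_notMem hxA, hAcard]
      · refine TransOnF_flip.1 (TransOnF_insert_src (r := fun a b => r b a) hirr
          (fun i j hij hji => hasym j i hij hji) ?_ (TransOnF_flip.2 hAtr))
        intro a ha
        have hmem := hmemA a ha
        have hne : a ≠ x := (Finset.mem_erase.1 hmem.1).1
        rcases htot a x hne with h1 | h1
        · exact h1
        · exact absurd h1 hmem.2

/-- greedy partition into transitive classes. -/
lemma exists_greedy_coloring {r : Fin n → Fin n → Prop}
    (hirr : ∀ i, ¬ r i i) (htot : ∀ i j : Fin n, i ≠ j → r i j ∨ r j i)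
    (hasym : ∀ i j, r i j → ¬ r j i) (s : ℕ) (hs : 1 ≤ s) :
    ∀ (N : ℕ) (S : Finset (Fin n)), S.card = N →
      ∃ k, k ≤ N / s + 2 ^ (s - 1) ∧ ∃ c : Fin n → ℕ, (∀ x ∈ S, c x < k) ∧
        ∀ m, TransOnF r (S.filter (fun x => c x = m)) := by
  intro N
  induction N using Nat.strong_induction_on with
  | _ N IH =>
  intro S hScard
  by_cases hsmall : N < 2 ^ (s - 1)
  · refine ⟨N, (Nat.le_of_lt hsmall).trans (Nat.le_add_left _ _), fun x => (S.filter (fun y => y < x)).card, ?_, ?_⟩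
    · intro x hxS
      have hsub : S.filter (fun y => y < x) ⊆ S.erase x := by
        intro y hy
        have := Finset.mem_filter.1 hy
        exact Finset.mem_erase.2 ⟨ne_of_lt this.2, this.1⟩
      calc (S.filter (fun y => y < x)).card ≤ (S.erase x).card := Finset.card_le_card hsub
        _ = N - 1 := by rw [Finset.card_erase_of_mem hxS, hScard]
        _ < N := by
            have : 0 < N := by rw [← hScard]; exact Finset.card_pos.2 ⟨x, hxS⟩
            omega
    · intro m i hi j hj l hl hij hjl
      have hinj : ∀ a ∈ S, ∀ b ∈ S,
          (S.filter (fun y => y < a)).card = (S.filter (fun y => y < b)).card → a = b := by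
        intro a ha b hb hab
        by_contra hne
        rcases lt_or_gt_of_ne hne with hlt | hlt
        · have : S.filter (fun y => y < a) ⊂ S.filter (fun y => y < b) := by
            refine Finset.ssubset_iff_of_subset (fun y hy => ?_) |>.2 ⟨a, ?_, ?_⟩
            · have := Finset.mem_filter.1 hy
              exact Finset.mem_filter.2 ⟨this.1, this.2.trans hlt⟩
            · exact Finset.mem_filter.2 ⟨ha, hlt⟩
            · intro hmem; exact absurd (Finset.mem_filter.1 hmem).2 (lt_irrefl a)
          exact absurd hab (ne_of_lt (Finset.card_lt_card this))
        · have : S.filter (fun y => y < b) ⊂ S.filter (fun y => y < a) := by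
            refine Finset.ssubset_iff_of_subset (fun y hy => ?_) |>.2 ⟨b, ?_, ?_⟩
            · have := Finset.mem_filter.1 hy
              exact Finset.mem_filter.2 ⟨this.1, this.2.trans hlt⟩
            · exact Finset.mem_filter.2 ⟨hb, hlt⟩
            · intro hmem; exact absurd (Finset.mem_filter.1 hmem).2 (lt_irrefl b)
          exact absurd hab.symm (ne_of_lt (Finset.card_lt_card this))
      have hi' := Finset.mem_filter.1 hi
      have hj' := Finset.mem_filter.1 hj
      have heq : i = j := hinj i hi'.1 j hj'.1 (hi'.2.trans hj'.2.symm)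
      subst heq
      exact absurd hij (hirr _)
  · push_neg at hsmall
    obtain ⟨A, hAsub, hAcard, hAtr⟩ := exists_transSet hirr htot hasym (s - 1) S
      (by rw [hScard]; exact hsmall)
    have hAcard' : A.card = s := by rw [hAcard]; omega
    have hsle : s ≤ N := by
      have h1 : s - 1 < 2 ^ (s - 1) := Nat.lt_two_pow_self
      omega
    have hS'card : (S \ A).card = N - s := by
      rw [Finset.card_sdiff_of_subset hAsub, hScard, hAcard']
    obtain ⟨k', hk'le, c', hc', htr'⟩ := IH (N - s) (by omega) (S \ A) hS'card
    refine ⟨k' + 1, ?_, fun x => if x ∈ A then k' else c' x, ?_, ?_⟩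
    · have hdiv : N / s = (N - s) / s + 1 := Nat.div_eq_sub_div (by omega) hsle
      omega
    · intro x hxS
      by_cases hxA : x ∈ A
      · simp [hxA]
      · have : c' x < k' := hc' x (Finset.mem_sdiff.2 ⟨hxS, hxA⟩)
        simp [hxA]; omega
    · intro m
      by_cases hm : m = k'
      · have heq : S.filter (fun x => (if x ∈ A then k' else c' x) = m) = A := by
          subst hm
          ext x
          simp only [Finset.mem_filter]
          constructor
          · rintro ⟨hxS, hx⟩
            by_contra hxA
            rw [if_neg hxA] at hx
            exact absurd hx (ne_of_lt (hc' x (Finset.mem_sdiff.2 ⟨hxS, hxA⟩)))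
          · intro hxA
            exact ⟨hAsub hxA, by rw [if_pos hxA]⟩
        rw [heq]; exact hAtr
      · have hsub : S.filter (fun x => (if x ∈ A then k' else c' x) = m) ⊆
            (S \ A).filter (fun x => c' x = m) := by
          intro x hxmem
          obtain ⟨hxS, hx⟩ := Finset.mem_filter.1 hxmem
          by_cases hxA : x ∈ A
          · rw [if_pos hxA] at hx; exact absurd hx.symm hm
          · rw [if_neg hxA] at hx
            exact Finset.mem_filter.2 ⟨Finset.mem_sdiff.2 ⟨hxS, hxA⟩, hx⟩
        exact TransOnF_mono hsub (htr' m)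

end Chunk2
section Chunk3

variable {n : ℕ}

lemma logb_le_nat {m c : ℕ} (h1 : 1 ≤ m) (h : m ≤ 2 ^ c) : Real.logb 2 m ≤ c := by
  have h2 : Real.logb 2 ((m:ℝ)) ≤ Real.logb 2 ((2:ℝ)^c) := by
    gcongr <;> first | exact_mod_cast h | exact_mod_cast h1 | norm_num
  calc Real.logb 2 m ≤ Real.logb 2 ((2:ℝ)^c) := h2
    _ = c := by rw [Real.logb_pow, Real.logb_self_eq_one (by norm_num)]; ring

lemma one_le_logb {m : ℕ} (h : 2 ≤ m) : 1 ≤ Real.logb 2 m := by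
  calc (1:ℝ) = Real.logb 2 ((2:ℝ)^(1:ℕ)) := by
        rw [Real.logb_pow, Real.logb_self_eq_one (by norm_num)]; ring
    _ ≤ Real.logb 2 m := by
        gcongr
        · norm_num
        · exact_mod_cast h

/-- tournament facts for an integral preference matrix -/
lemma integral_tournament {M : Fin n → Fin n → ℝ} (hM : IsPrefMatrix M) (hI : Integral M) :
    (∀ i : Fin n, ¬ M i i = 1) ∧ (∀ i j : Fin n, i ≠ j → M i j = 1 ∨ M j i = 1) ∧
      (∀ i j : Fin n, M i j = 1 → ¬ M j i = 1) := by
  obtain ⟨h0, hnn, hsum⟩ := hM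
  refine ⟨fun i h => by rw [h0] at h; norm_num at h, fun i j hij => ?_, fun i j h1 h2 => ?_⟩
  · rcases hI i j with h | h
    · right
      have := hsum i j hij
      linarith
    · exact Or.inl h
  · by_cases hij : i = j
    · subst hij; rw [h0] at h1; norm_num at h1
    · have := hsum i j hij; linarith

/-- the rationality number is at most `n / s + 2 ^ (s-1)` for every `s ≥ 1`. -/
lemma ratnum_le_greedy {M : Fin n → Fin n → ℝ} (hM : IsPrefMatrix M) (hI : Integral M)
    (s : ℕ) (hs : 1 ≤ s) : rationalityNumber M ≤ n / s + 2 ^ (s - 1) := by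
  obtain ⟨hirr, htot, hasym⟩ := integral_tournament hM hI
  obtain ⟨k, hk, c, hc, htr⟩ := exists_greedy_coloring (r := fun i j => M i j = 1)
    hirr htot hasym s hs n Finset.univ (by simp)
  have hrat : Rationalizable M k := by
    refine rationalizable_of_coloring hM htot k c (fun x => hc x (Finset.mem_univ x)) ?_
    intro i j l hij hjl h1 h2
    exact htr (c i) i (by simp) j (by simp [hij]) l (by simp [hij.trans hjl]) h1 h2
  exact le_trans (Nat.sInf_le hrat) hk

lemma ratnum_le_card {M : Fin n → Fin n → ℝ} (hM : IsPrefMatrix M) :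
    rationalityNumber M ≤ n :=
  Nat.sInf_le (rationalizable_trivial M hM)

lemma two_pow_half_helper {p : ℕ} (hp : 6 ≤ p) : p + 1 ≤ 2 ^ ((p + 1) / 2) := by
  have key : ∀ m : ℕ, 3 ≤ m → 2 * m + 1 ≤ 2 ^ m := by
    intro m hm
    induction m, hm using Nat.le_induction with
    | base => norm_num
    | succ m hm ih =>
      have h2 : 2 ^ (m + 1) = 2 * 2 ^ m := by ring
      omega
  rcases Nat.even_or_odd p with ⟨m, rfl⟩ | ⟨m, rfl⟩
  · have hm : 3 ≤ m := by omega
    have h1 : (m + m + 1) / 2 = m := by omega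
    rw [h1]
    have := key m hm
    omega
  · have h1 : (2 * m + 1 + 1) / 2 = m + 1 := by omega
    rw [h1]
    have h2 : m < 2 ^ m := Nat.lt_two_pow_self
    have h3 : 2 ^ (m + 1) = 2 * 2 ^ m := by ring
    omega

/-- Part 1 of the main theorem. -/
lemma part1 (hn : 2 ≤ n) (M : Fin n → Fin n → ℝ) (hM : IsPrefMatrix M) (hI : Integral M) :
    (rationalityNumber M : ℝ) ≤ 3 * n / Real.logb 2 n := by
  set L := Real.logb 2 n with hL
  have hL1 : 1 ≤ L := one_le_logb hn
  have hLpos : 0 < L := by linarith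
  rw [le_div_iff₀ hLpos]
  -- goal : ↑(rationalityNumber M) * L ≤ 3 * ↑n
  by_cases h8 : n ≤ 8
  · have ha : (rationalityNumber M : ℝ) ≤ n := by exact_mod_cast ratnum_le_card hM
    have hLle : L ≤ 3 := logb_le_nat (by omega : 1 ≤ n) (by omega : n ≤ 2 ^ 3)
    have h0 : (0:ℝ) ≤ (rationalityNumber M : ℝ) := Nat.cast_nonneg _
    nlinarith
  by_cases h16 : n ≤ 16
  · have ha : (rationalityNumber M : ℝ) ≤ (n / 2 : ℕ) + 2 := by
      have := ratnum_le_greedy hM hI 2 (by norm_num)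
      exact_mod_cast this
    have ha2 : (rationalityNumber M : ℝ) ≤ (n:ℝ) / 2 + 2 :=
      le_trans ha (by have := Nat.cast_div_le (α := ℝ) (m := n) (n := 2); linarith)
    have hLle : L ≤ 4 := logb_le_nat (by omega : 1 ≤ n) (by omega : n ≤ 2 ^ 4)
    have h0 : (0:ℝ) ≤ (rationalityNumber M : ℝ) := Nat.cast_nonneg _
    have hn9 : (9:ℝ) ≤ n := by exact_mod_cast (by omega : 9 ≤ n)
    nlinarith
  by_cases h32 : n ≤ 32
  · have ha : (rationalityNumber M : ℝ) ≤ (n / 3 : ℕ) + 4 := by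
      have := ratnum_le_greedy hM hI 3 (by norm_num)
      exact_mod_cast this
    have ha2 : (rationalityNumber M : ℝ) ≤ (n:ℝ) / 3 + 4 :=
      le_trans ha (by have := Nat.cast_div_le (α := ℝ) (m := n) (n := 3); push_cast; linarith)
    have hLle : L ≤ 5 := logb_le_nat (by omega : 1 ≤ n) (by omega : n ≤ 2 ^ 5)
    have h0 : (0:ℝ) ≤ (rationalityNumber M : ℝ) := Nat.cast_nonneg _
    have hn9 : (17:ℝ) ≤ n := by exact_mod_cast (by omega : 17 ≤ n)
    nlinarith
  by_cases h64 : n ≤ 64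
  · have ha : (rationalityNumber M : ℝ) ≤ (n / 3 : ℕ) + 4 := by
      have := ratnum_le_greedy hM hI 3 (by norm_num)
      exact_mod_cast this
    have ha2 : (rationalityNumber M : ℝ) ≤ (n:ℝ) / 3 + 4 :=
      le_trans ha (by have := Nat.cast_div_le (α := ℝ) (m := n) (n := 3); push_cast; linarith)
    have hLle : L ≤ 6 := logb_le_nat (by omega : 1 ≤ n) (by omega : n ≤ 2 ^ 6)
    have h0 : (0:ℝ) ≤ (rationalityNumber M : ℝ) := Nat.cast_nonneg _
    have hn9 : (33:ℝ) ≤ n := by exact_mod_cast (by omega : 33 ≤ n)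
    nlinarith
  · -- n ≥ 65
    push_neg at h64
    set p := Nat.log 2 n with hp
    have hp6 : 6 ≤ p := Nat.le_log_of_pow_le (by norm_num) (by omega : 2 ^ 6 ≤ n)
    set s := p / 2 + 1 with hs
    have hs1 : 1 ≤ s := by omega
    have hsm1 : s - 1 = p / 2 := by omega
    have ha : rationalityNumber M ≤ n / s + 2 ^ (p / 2) := by
      have := ratnum_le_greedy hM hI s hs1
      rwa [hsm1] at this
    -- second summand bound in ℕ : 2^(p/2) * (p+1) ≤ 2^p ≤ n
    have hsum2 : 2 ^ (p / 2) * (p + 1) ≤ n := by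
      have h1 : p + 1 ≤ 2 ^ ((p + 1) / 2) := two_pow_half_helper hp6
      have h2 : 2 ^ (p / 2) * 2 ^ ((p + 1) / 2) = 2 ^ p := by
        rw [← pow_add]
        congr 1
        omega
      have h3 : 2 ^ p ≤ n := Nat.pow_log_le_self 2 (by omega)
      calc 2 ^ (p / 2) * (p + 1) ≤ 2 ^ (p / 2) * 2 ^ ((p + 1) / 2) := by
            exact Nat.mul_le_mul_left _ h1
        _ = 2 ^ p := h2
        _ ≤ n := h3
    have hLle : L ≤ (p : ℝ) + 1 := by
      have h4 : n ≤ 2 ^ (p + 1) :=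
        le_of_lt (by rw [hp]; exact Nat.lt_pow_succ_log_self (by norm_num) n)
      have := logb_le_nat (by omega : 1 ≤ n) h4
      push_cast at this ⊢
      linarith
    have hLpos' : (0:ℝ) < p + 1 := by positivity
    have hspos : (0:ℝ) < s := by exact_mod_cast hs1
    -- main chain in ℝ
    have hcast : (rationalityNumber M : ℝ) ≤ (n:ℝ) / s + 2 ^ (p / 2) := by
      have h5 : ((n / s : ℕ) : ℝ) ≤ (n:ℝ) / s := Nat.cast_div_le
      have h6 : (rationalityNumber M : ℝ) ≤ ((n / s : ℕ) : ℝ) + ((2:ℝ)) ^ (p / 2) := by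
        exact_mod_cast ha
      linarith
    have hfirst : (n:ℝ) / s * ((p:ℝ) + 1) ≤ 2 * n := by
      have h2s : (p:ℝ) + 1 ≤ 2 * s := by
        have : p + 1 ≤ 2 * s := by omega
        exact_mod_cast this
      have hnn : (0:ℝ) ≤ (n:ℝ) / s := by positivity
      calc (n:ℝ) / s * ((p:ℝ) + 1) ≤ (n:ℝ) / s * (2 * s) := by
            exact mul_le_mul_of_nonneg_left h2s hnn
        _ = 2 * n * (s / s) := by ring
        _ = 2 * n := by rw [div_self (ne_of_gt hspos)]; ring
    have hsecond : (2:ℝ) ^ (p / 2) * ((p:ℝ) + 1) ≤ n := by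
      exact_mod_cast hsum2
    have hra : (0:ℝ) ≤ (rationalityNumber M : ℝ) := Nat.cast_nonneg _
    calc (rationalityNumber M : ℝ) * L ≤ ((n:ℝ) / s + 2 ^ (p / 2)) * ((p:ℝ) + 1) := by
          apply mul_le_mul hcast hLle (by linarith) (by positivity)
      _ = (n:ℝ) / s * ((p:ℝ) + 1) + (2:ℝ) ^ (p / 2) * ((p:ℝ) + 1) := by ring
      _ ≤ 2 * n + n := by linarith
      _ = 3 * n := by ring

end Chunk3
section Chunk4

variable {n : ℕ}

lemma exists_top (rel : Fin n → Fin n → Prop)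
    (htrans : ∀ {i j k : Fin n}, rel i j → rel j k → rel i k) :
    ∀ A : Finset (Fin n), A.Nonempty → (∀ i ∈ A, ∀ j ∈ A, i ≠ j → rel i j ∨ rel j i) →
      ∃ a ∈ A, ∀ b ∈ A, b ≠ a → rel a b := by
  intro A
  induction A using Finset.induction_on with
  | empty => rintro ⟨x, hx⟩ _; simp at hx
  | @insert x B hxB ih =>
    intro _ htot
    by_cases hB : B.Nonempty
    · have htotB : ∀ i ∈ B, ∀ j ∈ B, i ≠ j → rel i j ∨ rel j i := fun i hi j hj hij =>
        htot i (Finset.mem_insert_of_mem hi) j (Finset.mem_insert_of_mem hj) hij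
      obtain ⟨a, haB, ha⟩ := ih hB htotB
      have hax : x ≠ a := fun h => hxB (h ▸ haB)
      rcases htot x (Finset.mem_insert_self x B) a (Finset.mem_insert_of_mem haB) hax
        with hxa | hax'
      · refine ⟨x, Finset.mem_insert_self x B, ?_⟩
        intro b hb hbx
        rcases Finset.mem_insert.1 hb with rfl | hbB
        · exact absurd rfl hbx
        · by_cases hba : b = a
          · subst hba; exact hxa
          · exact htrans hxa (ha b hbB hba)
      · refine ⟨a, Finset.mem_insert_of_mem haB, ?_⟩
        intro b hb hba
        rcases Finset.mem_insert.1 hb with rfl | hbB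
        · exact hax'
        · exact ha b hbB hba
    · rw [Finset.not_nonempty_iff_eq_empty] at hB
      subst hB
      refine ⟨x, Finset.mem_insert_self x ∅, ?_⟩
      intro b hb hbx
      rcases Finset.mem_insert.1 hb with rfl | hbB
      · exact absurd rfl hbx
      · simp at hbB

lemma exists_sorted (rel : Fin n → Fin n → Prop)
    (htrans : ∀ {i j k : Fin n}, rel i j → rel j k → rel i k) :
    ∀ (m : ℕ) (A : Finset (Fin n)), A.card = m →
      (∀ i ∈ A, ∀ j ∈ A, i ≠ j → rel i j ∨ rel j i) →
      ∃ g : Fin m → Fin n, Function.Injective g ∧ (∀ i, g i ∈ A) ∧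
        ∀ i j : Fin m, i < j → rel (g i) (g j) := by
  intro m
  induction m with
  | zero =>
    intro A _ _
    exact ⟨Fin.elim0, fun i => i.elim0, fun i => i.elim0, fun i => i.elim0⟩
  | succ m ih =>
    intro A hcard htot
    have hne : A.Nonempty := Finset.card_pos.1 (by omega)
    obtain ⟨a, haA, ha⟩ := exists_top rel htrans A hne htot
    obtain ⟨g', hginj, hgmem, hgsort⟩ := ih (A.erase a)
      (by rw [Finset.card_erase_of_mem haA, hcard]; rfl)
      (fun i hi j hj hij => htot i (Finset.mem_of_mem_erase hi) j
        (Finset.mem_of_mem_erase hj) hij)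
    refine ⟨Fin.cons a g', ?_, ?_, ?_⟩
    · intro i j hEq
      induction i using Fin.cases with
      | zero =>
        induction j using Fin.cases with
        | zero => rfl
        | succ j' =>
          rw [Fin.cons_zero, Fin.cons_succ] at hEq
          exact absurd hEq.symm (Finset.ne_of_mem_erase (hgmem j'))
      | succ i' =>
        induction j using Fin.cases with
        | zero =>
          rw [Fin.cons_zero, Fin.cons_succ] at hEq
          exact absurd hEq (Finset.ne_of_mem_erase (hgmem i'))
        | succ j' =>
          rw [Fin.cons_succ, Fin.cons_succ] at hEq
          rw [hginj hEq]
    · intro i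
      induction i using Fin.cases with
      | zero => rw [Fin.cons_zero]; exact haA
      | succ i' => rw [Fin.cons_succ]; exact Finset.mem_of_mem_erase (hgmem i')
    · intro i j hij
      induction j using Fin.cases with
      | zero => exact absurd hij (Nat.not_lt_zero _)
      | succ j' =>
        induction i using Fin.cases with
        | zero =>
          rw [Fin.cons_zero, Fin.cons_succ]
          exact ha (g' j') (Finset.mem_of_mem_erase (hgmem j'))
            (Finset.ne_of_mem_erase (hgmem j'))
        | succ i' =>
          rw [Fin.cons_succ, Fin.cons_succ]
          exact hgsort i' j' (by exact_mod_cast Nat.lt_of_succ_lt_succ hij)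

/-- Mirsky-type bound: if every chain of the voter has size at most `m` and the voter is
`α`-rational, then `n ≤ m * α`. -/
lemma mirsky_bound (v : Voter (Fin n)) (α m : ℕ) (hrat : v.Rational α)
    (hchain : ∀ A : Finset (Fin n),
      (∀ i ∈ A, ∀ j ∈ A, i ≠ j → v.rel i j ∨ v.rel j i) → A.card ≤ m) :
    n ≤ m * α := by
  classical
  set chainsEnd : Fin n → Finset (Finset (Fin n)) := fun x =>
    Finset.univ.filter (fun A => x ∈ A ∧
      (∀ i ∈ A, ∀ j ∈ A, i ≠ j → v.rel i j ∨ v.rel j i) ∧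
      ∀ a ∈ A, a = x ∨ v.rel a x) with hCE
  set h : Fin n → ℕ := fun x => (chainsEnd x).sup Finset.card with hh
  have hmem_sing : ∀ x, ({x} : Finset (Fin n)) ∈ chainsEnd x := by
    intro x
    rw [hCE]
    refine Finset.mem_filter.2 ⟨Finset.mem_univ _, Finset.mem_singleton_self x, ?_, ?_⟩
    · intro i hi j hj hij
      rw [Finset.mem_singleton] at hi hj
      exact absurd (hi.trans hj.symm) hij
    · intro a ha; exact Or.inl (Finset.mem_singleton.1 ha)
  have h1 : ∀ x, 1 ≤ h x := by
    intro x
    have h2 := Finset.le_sup (f := Finset.card) (hmem_sing x)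
    rw [Finset.card_singleton] at h2
    exact h2
  have hhm : ∀ x, h x ≤ m := by
    intro x
    apply Finset.sup_le
    intro A hA
    exact hchain A (Finset.mem_filter.1 hA).2.2.1
  have hlt : ∀ x y, v.rel x y → h x < h y := by
    intro x y hxy
    obtain ⟨A, hA, hsup⟩ := Finset.exists_mem_eq_sup (chainsEnd x) ⟨{x}, hmem_sing x⟩
      Finset.card
    obtain ⟨-, hxA, htotA, hendA⟩ := Finset.mem_filter.1 hA
    have hyA : y ∉ A := by
      intro hyA
      rcases hendA y hyA with rfl | hyx
      · exact v.irrefl y hxy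
      · exact v.irrefl x (v.trans hxy hyx)
    have harel : ∀ a ∈ A, v.rel a y := by
      intro a ha
      rcases hendA a ha with rfl | hax
      · exact hxy
      · exact v.trans hax hxy
    have hB : insert y A ∈ chainsEnd y := by
      rw [hCE]
      refine Finset.mem_filter.2 ⟨Finset.mem_univ _, Finset.mem_insert_self y A, ?_, ?_⟩
      · intro i hi j hj hij
        rcases Finset.mem_insert.1 hi with rfl | hiA
        · rcases Finset.mem_insert.1 hj with rfl | hjA
          · exact absurd rfl hij
          · exact Or.inr (harel j hjA)
        · rcases Finset.mem_insert.1 hj with rfl | hjA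
          · exact Or.inl (harel i hiA)
          · exact htotA i hiA j hjA hij
      · intro a ha
        rcases Finset.mem_insert.1 ha with rfl | haA
        · exact Or.inl rfl
        · exact Or.inr (harel a haA)
    have hge : h y ≥ (insert y A).card := Finset.le_sup (f := Finset.card) hB
    rw [Finset.card_insert_of_notMem hyA] at hge
    have hxcard : h x = A.card := hsup
    omega
  -- levels are antichains
  have hlevel : ∀ t : ℕ, v.IsAntichainOf (Finset.univ.filter (fun x => h x - 1 = t)) := by
    intro t i hi j hj hij
    have hi' := (Finset.mem_filter.1 hi).2
    have hj' := (Finset.mem_filter.1 hj).2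
    constructor
    · intro hrel
      have := hlt i j hrel
      have := h1 i; have := h1 j
      omega
    · intro hrel
      have := hlt j i hrel
      have := h1 i; have := h1 j
      omega
  have hsub : (Finset.univ : Finset (Fin n)) ⊆
      (Finset.range m).biUnion (fun t => Finset.univ.filter (fun x => h x - 1 = t)) := by
    intro x _
    refine Finset.mem_biUnion.2 ⟨h x - 1, Finset.mem_range.2 ?_, ?_⟩
    · have := h1 x; have := hhm x; omega
    · exact Finset.mem_filter.2 ⟨Finset.mem_univ x, rfl⟩
  calc n = (Finset.univ : Finset (Fin n)).card := by simp
    _ ≤ ((Finset.range m).biUnion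
          (fun t => Finset.univ.filter (fun x => h x - 1 = t))).card :=
        Finset.card_le_card hsub
    _ ≤ ∑ t ∈ Finset.range m, (Finset.univ.filter (fun x => h x - 1 = t)).card :=
        Finset.card_biUnion_le
    _ ≤ ∑ _t ∈ Finset.range m, α :=
        Finset.sum_le_sum (fun t _ => hrat _ (hlevel t))
    _ = m * α := by rw [Finset.sum_const, Finset.card_range, smul_eq_mul]

end Chunk4
section Chunk5

/-- type of ordered pairs of a `Fin` type. -/
def PairsF (m : ℕ) : Type := {p : Fin m × Fin m // p.1 < p.2}

noncomputable instance (m : ℕ) : Fintype (PairsF m) := by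
  unfold PairsF; infer_instance

instance (m : ℕ) : DecidableEq (PairsF m) := by
  unfold PairsF; infer_instance

/-- tournament relation encoded by a function on pairs. -/
def rOf {m : ℕ} (f : PairsF m → Bool) (i j : Fin m) : Prop :=
  if h : i < j then f ⟨(i, j), h⟩ = true
  else if h' : j < i then f ⟨(j, i), h'⟩ = false
  else False

variable {n : ℕ}

lemma rOf_irrefl (f : PairsF n → Bool) (i : Fin n) : ¬ rOf f i i := by
  simp [rOf]

lemma rOf_total (f : PairsF n → Bool) {i j : Fin n} (hij : i ≠ j) :
    rOf f i j ∨ rOf f j i := by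
  rcases lt_or_gt_of_ne hij with h | h
  · by_cases hf : f ⟨(i, j), h⟩ = true
    · left; simp [rOf, h, hf]
    · right
      have hnot : ¬ j < i := asymm h
      simp only [rOf, dif_neg (asymm h : ¬ j < i), dif_pos h]
      simpa using hf
  · by_cases hf : f ⟨(j, i), h⟩ = true
    · right; simp [rOf, h, hf]
    · left
      simp only [rOf, dif_neg (asymm h : ¬ i < j), dif_pos h]
      simpa using hf

lemma rOf_asymm (f : PairsF n → Bool) {i j : Fin n} (h1 : rOf f i j) (h2 : rOf f j i) :
    False := by
  unfold rOf at h1 h2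
  rcases lt_trichotomy i j with h | h | h
  · rw [dif_pos h] at h1
    rw [dif_neg (asymm h), dif_pos h] at h2
    simp [h1] at h2
  · subst h; simp at h1
  · rw [dif_neg (asymm h), dif_pos h] at h1
    rw [dif_pos h] at h2
    simp [h2] at h1

/-- counting functions with prescribed values on an injectively-indexed set of coords. -/
lemma card_fix {Ω P : Type} [Fintype Ω] [DecidableEq Ω] [Fintype P]
    (ψ : P → Ω) (hψ : Function.Injective ψ) (w : P → Bool) :
    (Finset.univ.filter (fun f : Ω → Bool => ∀ p, f (ψ p) = w p)).card
      = 2 ^ (Fintype.card Ω - Fintype.card P) := by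
  classical
  rw [← Fintype.card_subtype]
  have e : {f : Ω → Bool // ∀ p, f (ψ p) = w p} ≃ ({x : Ω // x ∉ Set.range ψ} → Bool) :=
    { toFun := fun f x => f.1 x.1
      invFun := fun g => ⟨fun x =>
          if hx : ∃ p, ψ p = x then w hx.choose else g ⟨x, fun hr => hx hr⟩, by
        intro p
        have hx : ∃ q, ψ q = ψ p := ⟨p, rfl⟩
        simp only [dif_pos hx]
        have hspec := hx.choose_spec
        exact congrArg w (hψ hspec)⟩
      left_inv := by
        intro f
        apply Subtype.ext
        funext x
        by_cases hx : ∃ p, ψ p = x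
        · simp only [dif_pos hx]
          have hspec := hx.choose_spec
          exact (f.2 hx.choose).symm.trans (congrArg f.1 hspec)
        · simp only [dif_neg hx]
      right_inv := by
        intro g
        funext x
        have hx : ¬ ∃ p, ψ p = x.1 := fun h => x.2 h
        simp only [dif_neg hx] }
  rw [Fintype.card_congr e]
  rw [Fintype.card_fun, Fintype.card_bool]
  congr 1
  rw [Fintype.card_subtype_compl]
  congr 1
  exact (Fintype.card_congr (Equiv.ofInjective ψ hψ)).symm

lemma pairsF_card_ge (t : ℕ) : t * (t - 1) / 2 ≤ Fintype.card (PairsF t) := by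
  classical
  set F : (Σ j : Fin t, Fin j.1) → PairsF t := fun q =>
    ⟨(⟨q.2.1, lt_trans q.2.2 q.1.2⟩, q.1), q.2.2⟩ with hFdef
  have hF : Function.Injective F := by
    rintro ⟨j, i⟩ ⟨j', i'⟩ hEq
    have h1 : j = j' := congrArg (fun z : PairsF t => z.1.2) hEq
    have h2 : (i : ℕ) = (i' : ℕ) := congrArg (fun z : PairsF t => (z.1.1 : ℕ)) hEq
    subst h1
    have h3 : i = i' := Fin.ext h2
    subst h3
    rfl
  have hcard := Fintype.card_le_of_injective F hF
  have hsig : Fintype.card (Σ j : Fin t, Fin j.1) = t * (t - 1) / 2 := by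
    rw [Fintype.card_sigma]
    simp only [Fintype.card_fin]
    rw [show (∑ x : Fin t, (x : ℕ)) = ∑ i ∈ Finset.range t, i from
      Fin.sum_univ_eq_sum_range (fun i => i) t]
    have := Finset.sum_range_id_mul_two t
    omega
  omega

lemma pairsF_mono {a b : ℕ} (h : a ≤ b) :
    Fintype.card (PairsF a) ≤ Fintype.card (PairsF b) := by
  apply Fintype.card_le_of_injective
    (fun p : PairsF a => (⟨(Fin.castLE h p.1.1, Fin.castLE h p.1.2), p.2⟩ : PairsF b))
  rintro ⟨⟨x, y⟩, h1⟩ ⟨⟨x', y'⟩, h2⟩ hEq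
  apply Subtype.ext
  have h3 := congrArg Subtype.val hEq
  have hx := congrArg Prod.fst h3
  have hy := congrArg Prod.snd h3
  simp only [Fin.ext_iff, Fin.coe_castLE] at hx hy
  show (x, y) = (x', y')
  rw [Prod.mk.injEq]
  exact ⟨Fin.ext hx, Fin.ext hy⟩

/-- existence of a tournament with no transitive sequence of length `t`. -/
lemma exists_good_tournament (t : ℕ)
    (hD : Nat.descFactorial n t < 2 ^ (t * (t - 1) / 2)) :
    ∃ f : PairsF n → Bool, ¬ ∃ g : Fin t → Fin n, Function.Injective g ∧
      ∀ i j : Fin t, i < j → rOf f (g i) (g j) := by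
  classical
  by_contra hcon
  push_neg at hcon
  set Bad : (Fin t ↪ Fin n) → Finset (PairsF n → Bool) := fun e =>
    Finset.univ.filter (fun f => ∀ i j : Fin t, i < j → rOf f (e i) (e j)) with hBad
  have hcover : (Finset.univ : Finset (PairsF n → Bool)) ⊆
      Finset.univ.biUnion (fun e : Fin t ↪ Fin n => Bad e) := by
    intro f _
    obtain ⟨g, hginj, hgsort⟩ := hcon f
    exact Finset.mem_biUnion.2 ⟨⟨g, hginj⟩, Finset.mem_univ _,
      Finset.mem_filter.2 ⟨Finset.mem_univ _, hgsort⟩⟩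
  have hbadcard : ∀ e : Fin t ↪ Fin n,
      (Bad e).card ≤ 2 ^ (Fintype.card (PairsF n) - Fintype.card (PairsF t)) := by
    intro e
    set ψ : PairsF t → PairsF n := fun p =>
      if h : e p.1.1 < e p.1.2 then ⟨(e p.1.1, e p.1.2), h⟩
      else ⟨(e p.1.2, e p.1.1),
        lt_of_le_of_ne (not_lt.1 h) (fun hEq => (ne_of_lt p.2) (e.injective hEq).symm)⟩
      with hψdef
    set w : PairsF t → Bool := fun p => if e p.1.1 < e p.1.2 then true else false with hwdef
    have hψinj : Function.Injective ψ := by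
      rintro ⟨⟨a, b⟩, hab⟩ ⟨⟨c, d⟩, hcd⟩ hEq
      apply Subtype.ext
      show (a, b) = (c, d)
      simp only [hψdef] at hEq
      by_cases h1 : e a < e b <;> by_cases h2 : e c < e d
      · simp only [h1, h2, reduceDIte] at hEq
        have h3 := congrArg Subtype.val hEq
        have hac := e.injective (congrArg Prod.fst h3)
        have hbd := e.injective (congrArg Prod.snd h3)
        rw [hac, hbd]
      · simp only [h1, h2, reduceDIte] at hEq
        have h3 := congrArg Subtype.val hEq
        have had := e.injective (congrArg Prod.fst h3)
        have hbc := e.injective (congrArg Prod.snd h3)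
        subst had; subst hbc
        exact absurd hcd (asymm hab)
      · simp only [h1, h2, reduceDIte] at hEq
        have h3 := congrArg Subtype.val hEq
        have hbc := e.injective (congrArg Prod.fst h3)
        have had := e.injective (congrArg Prod.snd h3)
        subst hbc; subst had
        exact absurd hcd (asymm hab)
      · simp only [h1, h2, reduceDIte] at hEq
        have h3 := congrArg Subtype.val hEq
        have hbd := e.injective (congrArg Prod.fst h3)
        have hac := e.injective (congrArg Prod.snd h3)
        rw [hac, hbd]
    have hsubfix : Bad e ⊆ Finset.univ.filter (fun f : PairsF n → Bool =>
        ∀ p, f (ψ p) = w p) := by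
      intro f hf
      have hf' := (Finset.mem_filter.1 hf).2
      refine Finset.mem_filter.2 ⟨Finset.mem_univ _, ?_⟩
      rintro ⟨⟨a, b⟩, hab⟩
      have hr := hf' a b hab
      unfold rOf at hr
      by_cases h1 : e a < e b
      · rw [dif_pos h1] at hr
        simp only [hψdef, hwdef, dif_pos h1, if_pos h1]
        simpa [h1] using hr
      · have h2 : e b < e a :=
          lt_of_le_of_ne (not_lt.1 h1) (fun hEq => (ne_of_lt hab) (e.injective hEq).symm)
        rw [dif_neg h1, dif_pos h2] at hr
        simp only [hψdef, hwdef, dif_neg h1, if_neg h1]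
        simpa [h1] using hr
    calc (Bad e).card ≤ _ := Finset.card_le_card hsubfix
      _ = 2 ^ (Fintype.card (PairsF n) - Fintype.card (PairsF t)) := card_fix ψ hψinj w
  have htotal : (2 : ℕ) ^ (Fintype.card (PairsF n)) ≤
      (Finset.univ.biUnion (fun e : Fin t ↪ Fin n => Bad e)).card := by
    have h1 := Finset.card_le_card hcover
    rwa [Finset.card_univ, Fintype.card_fun, Fintype.card_bool] at h1
  have hsum : ((Finset.univ : Finset (Fin t ↪ Fin n)).biUnion (fun e => Bad e)).card ≤
      Nat.descFactorial n t * 2 ^ (Fintype.card (PairsF n) - Fintype.card (PairsF t)) := by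
    calc _ ≤ ∑ e ∈ (Finset.univ : Finset (Fin t ↪ Fin n)), (Bad e).card :=
          Finset.card_biUnion_le
      _ ≤ ∑ _e ∈ (Finset.univ : Finset (Fin t ↪ Fin n)),
            2 ^ (Fintype.card (PairsF n) - Fintype.card (PairsF t)) :=
          Finset.sum_le_sum (fun e _ => hbadcard e)
      _ = Fintype.card (Fin t ↪ Fin n) *
            2 ^ (Fintype.card (PairsF n) - Fintype.card (PairsF t)) := by
          rw [Finset.sum_const, Finset.card_univ, smul_eq_mul]
      _ = Nat.descFactorial n t *
            2 ^ (Fintype.card (PairsF n) - Fintype.card (PairsF t)) := by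
          rw [Fintype.card_embedding_eq, Fintype.card_fin, Fintype.card_fin]
  rcases (Finset.univ : Finset (Fin t ↪ Fin n)).eq_empty_or_nonempty with hemp | ⟨e, -⟩
  · rw [hemp] at htotal
    simp only [Finset.biUnion_empty, Finset.card_empty] at htotal
    have h2 : 0 < 2 ^ (Fintype.card (PairsF n)) := Nat.pow_pos (by norm_num)
    omega
  · have htn : t ≤ n := by
      have := Fintype.card_le_of_injective e.1 e.2
      simpa using this
    have hPt : Fintype.card (PairsF t) ≤ Fintype.card (PairsF n) := pairsF_mono htn
    have hKge := pairsF_card_ge t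
    have hlt : Nat.descFactorial n t *
        2 ^ (Fintype.card (PairsF n) - Fintype.card (PairsF t)) <
        2 ^ Fintype.card (PairsF n) := by
      have h1 : Nat.descFactorial n t < 2 ^ Fintype.card (PairsF t) :=
        lt_of_lt_of_le hD (Nat.pow_le_pow_right (by norm_num) hKge)
      calc Nat.descFactorial n t *
            2 ^ (Fintype.card (PairsF n) - Fintype.card (PairsF t))
          < 2 ^ Fintype.card (PairsF t) *
            2 ^ (Fintype.card (PairsF n) - Fintype.card (PairsF t)) :=
            mul_lt_mul_of_pos_right h1 (Nat.pow_pos (by norm_num))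
        _ = 2 ^ Fintype.card (PairsF n) := by
            rw [← pow_add]
            congr 1
            omega
    omega

end Chunk5
section Chunk6

variable {n : ℕ}

lemma nat_le_logb {b m : ℕ} (h1 : 1 ≤ m) (h : 2 ^ b ≤ m) : (b : ℝ) ≤ Real.logb 2 m := by
  have h2 : Real.logb 2 ((2:ℝ) ^ b) ≤ Real.logb 2 (m : ℝ) := by
    gcongr <;> first | exact_mod_cast h | exact_mod_cast h1 | norm_num | positivity
  calc (b : ℝ) = Real.logb 2 ((2:ℝ) ^ b) := by
        rw [Real.logb_pow, Real.logb_self_eq_one (by norm_num)]; ring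
    _ ≤ _ := h2

lemma part2_main (hn : 2 ≤ n) :
    ∃ M : Fin n → Fin n → ℝ, IsPrefMatrix M ∧ Integral M ∧
      (n : ℝ) / (2 * Real.logb 2 n + 1) ≤ (rationalityNumber M : ℝ) := by
  classical
  set b := Nat.log 2 (n ^ 2) with hbdef
  set t := b + 2 with htdef
  have hn2pos : 1 ≤ n ^ 2 := by nlinarith
  have hsq : n ^ 2 < 2 ^ (b + 1) := by
    rw [hbdef]
    exact Nat.lt_pow_succ_log_self (by norm_num) (n ^ 2)
  have hev : 2 ∣ t * (t - 1) := by
    have h := Nat.even_mul_succ_self (b + 1)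
    have heq : t * (t - 1) = (b + 1) * (b + 1 + 1) := by
      have ht1 : t - 1 = b + 1 := rfl
      rw [ht1, htdef]
      ring
    rw [heq]
    exact h.two_dvd
  have hD : Nat.descFactorial n t < 2 ^ (t * (t - 1) / 2) := by
    have hle : Nat.descFactorial n t ≤ n ^ t := Nat.descFactorial_le_pow n t
    have hnt : n ^ t < 2 ^ (t * (t - 1) / 2) := by
      have h2 : (n ^ t) ^ 2 < (2 ^ (t * (t - 1) / 2)) ^ 2 := by
        have e1 : (n ^ t) ^ 2 = (n ^ 2) ^ t := by ring
        have e2 : ((2 : ℕ) ^ (t * (t - 1) / 2)) ^ 2 = 2 ^ (t * (t - 1)) := by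
          rw [← pow_mul, Nat.div_mul_cancel hev]
        rw [e1, e2]
        calc (n ^ 2) ^ t < (2 ^ (b + 1)) ^ t :=
              Nat.pow_lt_pow_left hsq (by omega)
          _ = 2 ^ ((b + 1) * t) := by rw [← pow_mul]
          _ = 2 ^ (t * (t - 1)) := by
              congr 1
              have ht1 : t - 1 = b + 1 := rfl
              rw [ht1]
              ring
      by_contra hle2
      push_neg at hle2
      have h3 := Nat.pow_le_pow_left hle2 2
      omega
    omega
  obtain ⟨f, hgood⟩ := exists_good_tournament t hD
  set M : Fin n → Fin n → ℝ := fun i j => if rOf f i j then 1 else 0 with hMdef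
  have hM : IsPrefMatrix M := by
    refine ⟨fun i => by simp [hMdef, rOf_irrefl],
      fun i j => by simp only [hMdef]; split <;> norm_num, fun i j hij => ?_⟩
    rcases rOf_total f hij with h | h
    · have h2 : ¬ rOf f j i := fun h2 => rOf_asymm f h h2
      simp [hMdef, h, h2]
    · have h2 : ¬ rOf f i j := fun h2 => rOf_asymm f h2 h
      simp [hMdef, h, h2]
  have hI : Integral M := by
    intro i j
    simp only [hMdef]
    split
    · exact Or.inr rfl
    · exact Or.inl rfl
  refine ⟨M, hM, hI, ?_⟩
  have hne : {α | Rationalizable M α}.Nonempty := ⟨n, rationalizable_trivial M hM⟩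
  have hmem := Nat.sInf_mem hne
  obtain ⟨V, hC, hrat⟩ := hmem
  obtain ⟨v, hv⟩ := List.exists_mem_of_ne_nil V hC.1
  have hsub : ∀ i j, v.rel i j → rOf f i j := by
    intro i j h
    by_contra h2
    have h1 := rel_subset_of_consistent hM hI hC hv h
    simp only [hMdef] at h1
    rw [if_neg h2] at h1
    norm_num at h1
  have hchain : ∀ A : Finset (Fin n),
      (∀ i ∈ A, ∀ j ∈ A, i ≠ j → v.rel i j ∨ v.rel j i) → A.card ≤ t - 1 := by
    intro A htot
    by_contra hlarge
    push_neg at hlarge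
    have htA : t ≤ A.card := by omega
    obtain ⟨B, hBA, hBcard⟩ := Finset.exists_subset_card_eq htA
    obtain ⟨g, hginj, hgmem, hgsort⟩ := exists_sorted v.rel v.trans t B hBcard
      (fun i hi j hj hij => htot i (hBA hi) j (hBA hj) hij)
    exact hgood ⟨g, hginj, fun i j hij => hsub _ _ (hgsort i j hij)⟩
  have hmirsky : n ≤ (t - 1) * rationalityNumber M :=
    mirsky_bound v (rationalityNumber M) (t - 1) (hrat v hv) hchain
  -- real computation
  have hL1 : 1 ≤ Real.logb 2 n := one_le_logb hn
  have hb2L : (b : ℝ) ≤ 2 * Real.logb 2 n := by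
    have h1 : (b : ℝ) ≤ Real.logb 2 ((n ^ 2 : ℕ) : ℝ) := by
      apply nat_le_logb hn2pos
      rw [hbdef]
      exact Nat.pow_log_le_self 2 (by omega)
    have h2 : ((n ^ 2 : ℕ) : ℝ) = (n : ℝ) ^ (2 : ℕ) := by push_cast; ring
    rw [h2, Real.logb_pow] at h1
    push_cast at h1
    linarith
  have hpos : (0 : ℝ) < 2 * Real.logb 2 n + 1 := by linarith
  rw [div_le_iff₀ hpos]
  have hcast : (n : ℝ) ≤ ((b : ℝ) + 1) * (rationalityNumber M : ℝ) := by
    have ht1 : t - 1 = b + 1 := rfl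
    rw [ht1] at hmirsky
    exact_mod_cast hmirsky
  have hα0 : (0 : ℝ) ≤ (rationalityNumber M : ℝ) := Nat.cast_nonneg _
  nlinarith

end Chunk6


/-- Main theorem for integral matrices: every integral preference matrix
on `n ≥ 2` candidates satisfies `α(M) ≤ 3n/log₂ n` (with `χ(G_M) = n`), and for all
sufficiently large `n` some integral preference matrix on `n` candidates satisfies
`α(M) ≥ n/(2·log₂ n + 1)`. -/
theorem integral_main_theorem :
    (∀ n : ℕ, 2 ≤ n → ∀ M : Fin n → Fin n → ℝ, IsPrefMatrix M → Integral M →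
      (rationalityNumber M : ℝ) ≤ 3 * n / Real.logb 2 n) ∧
    (∃ n₀ : ℕ, ∀ n : ℕ, n₀ ≤ n →
      ∃ M : Fin n → Fin n → ℝ, IsPrefMatrix M ∧ Integral M ∧
        (n : ℝ) / (2 * Real.logb 2 n + 1) ≤ (rationalityNumber M : ℝ)) := by
  constructor
  · intro n hn M hM hI
    exact part1 hn M hM hI
  · exact ⟨2, fun n hn => part2_main hn⟩
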